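/- arXiv:1706.02516 — 5 statements merged into one kernel-verified Lean document; each statement's English description precedes it below -/
import Mathlib

section
/- Each switching map F_S is an affine involution of R^{C(n,2)} that maps the metric polytope METP(K_n) onto itself, where METP(K_n) is the set of symmetric functions d with d(i,j) ≤ d(i,k) + d(k,j) and d(i,j) + d(j,k) + d(k,i) ≤ 2 for all i, j, k. -/
/-- The switching operation `F_S` on functions of pairs. -/
def switching {n : ℕ} (S : Finset (Fin n)) (d : Fin n → Fin n → ℝ) : Fin n → Fin n → ℝ :=
  fun i j => if Xor (i ∈ S) (j ∈ S) then 1 - d i j else d i j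

/-- The metric polytope `METP(K_n)`: symmetric functions satisfying all triangle
and perimeter inequalities. -/
def metricPolytope (n : ℕ) : Set (Fin n → Fin n → ℝ) :=
  { d | (∀ i j, d i j = d j i) ∧
        (∀ i j k, d i j ≤ d i k + d k j) ∧
        (∀ i j k, d i j + d j k + d k i ≤ 2) }


/-! On every triangle `i, j, k`, the cut of `S` contains either no edge or exactly two edges
(those at the vertex separated from the other two). Replacing `d` by `1 - d` on two edges of a
triangle permutes its three triangle inequalities and its perimeter inequality, so `F_S` maps
`METP(K_n)` into itself; being an involution, it maps it onto itself. -/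

variable {n : ℕ}

theorem switching_involutive (S : Finset (Fin n)) : Function.Involutive (switching S) := by
  intro d
  funext i j
  by_cases h : Xor (i ∈ S) (j ∈ S) <;> simp [switching, h]

def switchingAffineMap (S : Finset (Fin n)) :
    (Fin n → Fin n → ℝ) →ᵃ[ℝ] (Fin n → Fin n → ℝ) :=
  AffineMap.pi fun i => AffineMap.pi fun j =>
    let coord : (Fin n → Fin n → ℝ) →ᵃ[ℝ] ℝ :=
      (AffineMap.proj (k := ℝ) (P := fun _ => ℝ) j).comp (AffineMap.proj i)
    if Xor (i ∈ S) (j ∈ S) then AffineMap.const ℝ _ 1 - coord else coord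

theorem coe_switchingAffineMap (S : Finset (Fin n)) : ⇑(switchingAffineMap S) = switching S := by
  funext d i j
  by_cases h : Xor (i ∈ S) (j ∈ S) <;> simp [switchingAffineMap, switching, h]

theorem switching_mapsTo_metricPolytope (S : Finset (Fin n)) :
    Set.MapsTo (switching S) (metricPolytope n) (metricPolytope n) := by
  rintro d ⟨hsymm, htri, hper⟩
  refine ⟨fun i j => ?_, fun i j k => ?_, fun i j k => ?_⟩
  · simp only [switching, hsymm i j, xor_comm]
  all_goals
    by_cases hi : i ∈ S <;> by_cases hj : j ∈ S <;> by_cases hk : k ∈ S <;>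
      simp [switching, hi, hj, hk] <;>
      linarith [htri i j k, htri i k j, htri k j i, htri j i k, htri k i j, htri j k i,
        hper i j k, hsymm i j, hsymm j k, hsymm i k]

theorem Function.Involutive.image_eq_of_mapsTo {α : Type*} {f : α → α} {s : Set α}
    (hf : f.Involutive) (h : Set.MapsTo f s s) : f '' s = s :=
  h.image_subset.antisymm fun x hx => ⟨f x, h hx, hf x⟩

/-- each switching `F_S` is an affine involution of `ℝ^{C(n,2)}`
mapping the metric polytope `METP(K_n)` onto itself. -/
theorem switching_affine_involution_METP (n : ℕ) (S : Finset (Fin n)) :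
    (switching S ∘ switching S = id) ∧
    (∃ A : (Fin n → Fin n → ℝ) →ᵃ[ℝ] (Fin n → Fin n → ℝ), ⇑A = switching S) ∧
    switching S '' metricPolytope n = metricPolytope n :=
  ⟨(switching_involutive S).comp_self, ⟨switchingAffineMap S, coe_switchingAffineMap S⟩,
    (switching_involutive S).image_eq_of_mapsTo (switching_mapsTo_metricPolytope S)⟩
end

section
/- An oriented multicut δ'(S_1,...,S_r) associated to an ordered partition (S_1,...,S_r) of {1,...,n} satisfies the cycle equality d(i,j) + d(j,k) + d(k,i) = d(j,i) + d(k,j) + d(i,k) for all triples i, j, k if and only if r ≤ 2 (i.e., it is an oriented cut). -/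
/-! The cycle equality at `i, j, k` only sees the parts `p i, p j, p k`. If two of them coincide,
both sides agree; if they are pairwise distinct, one side counts two increasing pairs and the
other only one. So the equality holds for all triples iff no three parts exist, i.e. `r ≤ 2`. -/

/-- The oriented multicut of an ordered partition of `{1,…,n}` into `r` nonempty
parts, encoded by a surjective part-index map `p : Fin n → Fin r`:
`δ'(x,y) = 1` iff the part of `x` precedes the part of `y`. -/
def orientedMulticut {n r : ℕ} (p : Fin n → Fin r) (x y : Fin n) : ℝ :=
  if p x < p y then 1 else 0

theorem ite_lt_cycle_eq_iff {β : Type*} [LinearOrder β] (a b c : β) :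
    ((if a < b then (1 : ℝ) else 0) + (if b < c then 1 else 0) + (if c < a then 1 else 0) =
      (if b < a then 1 else 0) + (if c < b then 1 else 0) + (if a < c then 1 else 0)) ↔
      a = b ∨ b = c ∨ c = a := by
  rcases lt_trichotomy a b with hab | hab | hab <;>
    rcases lt_trichotomy b c with hbc | hbc | hbc <;>
    rcases lt_trichotomy c a with hca | hca | hca <;>
    simp_all [lt_asymm, ne_of_lt, ne_of_gt] <;> order

theorem orientedMulticut_cycle_eq_iff {n r : ℕ} (p : Fin n → Fin r) (i j k : Fin n) :
    orientedMulticut p i j + orientedMulticut p j k + orientedMulticut p k i =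
        orientedMulticut p j i + orientedMulticut p k j + orientedMulticut p i k ↔
      p i = p j ∨ p j = p k ∨ p k = p i :=
  ite_lt_cycle_eq_iff (p i) (p j) (p k)

theorem Fin.eq_or_eq_or_eq_of_le_two {r : ℕ} (hr : r ≤ 2) (a b c : Fin r) :
    a = b ∨ b = c ∨ c = a := by
  simp only [Fin.ext_iff]
  omega

/-- an oriented multicut satisfies the cycle equality for all
triples iff `r ≤ 2`, i.e. iff it is an oriented cut. -/
theorem multicut_cycle_equality_iff (n r : ℕ) (p : Fin n → Fin r)
    (hp : Function.Surjective p) :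
    (∀ i j k : Fin n,
        orientedMulticut p i j + orientedMulticut p j k + orientedMulticut p k i =
        orientedMulticut p j i + orientedMulticut p k j + orientedMulticut p i k) ↔
      r ≤ 2 := by
  simp only [orientedMulticut_cycle_eq_iff]
  refine ⟨fun h => ?_, fun hr i j k => Fin.eq_or_eq_or_eq_of_le_two hr _ _ _⟩
  by_contra! hr
  obtain ⟨i, hi⟩ := hp ⟨0, by omega⟩
  obtain ⟨j, hj⟩ := hp ⟨1, by omega⟩
  obtain ⟨k, hk⟩ := hp ⟨2, by omega⟩
  simpa [hi, hj, hk] using h i j k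
end

section
/- The oriented switching F_S preserves weightability: if d is a weightable quasi-metric on {1,...,n} with values in [0,1] satisfying d(j,i) + d(i,k) + d(k,j) ≤ 2 for all i,j,k, then F_S(d), defined by F_S(d)(i,j) = 1 - d(j,i) if |S ∩ {i,j}| = 1 and d(i,j) otherwise, is also a weightable quasi-metric satisfying the same bounds. -/
/-!
Switching replaces `d(i,j)` by `1 - d(j,i)` exactly on the pairs separated by `S`, so the
antisymmetric part `d(i,j) - d(j,i)` is unchanged and the old weights still work. On a triple
`i, j, k` with one point separated from the other two, the switching exchanges the triangle
inequalities of `d` with its perimeter inequalities `d(j,i) + d(i,k) + d(k,j) ≤ 2`; this family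
of inequalities is therefore preserved as a whole.
-/

instance xor'DecidableOfDecidable (a b : Prop) [Decidable a] [Decidable b] :
    Decidable (Xor' a b) := by
  unfold Xor'; infer_instance

def orientedSwitching {n : ℕ} (S : Finset (Fin n)) (d : Fin n → Fin n → ℝ) :
    Fin n → Fin n → ℝ :=
  fun i j => if Xor' (i ∈ S) (j ∈ S) then 1 - d j i else d i j

section OrientedSwitching

variable {n : ℕ} (S : Finset (Fin n)) (d : Fin n → Fin n → ℝ)

theorem orientedSwitching_self (i : Fin n) : orientedSwitching S d i i = d i i := by
  simp [orientedSwitching, Xor']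

theorem orientedSwitching_sub_swap (i j : Fin n) :
    orientedSwitching S d i j - orientedSwitching S d j i = d i j - d j i := by
  by_cases h : Xor (i ∈ S) (j ∈ S)
  · simp only [orientedSwitching, Xor', xor_comm (j ∈ S), h, if_true]
    ring
  · simp only [orientedSwitching, Xor', xor_comm (j ∈ S), h, if_false]

variable {d}

theorem orientedSwitching_nonneg (hnn : ∀ i j, 0 ≤ d i j) (hle1 : ∀ i j, d i j ≤ 1)
    (i j : Fin n) : 0 ≤ orientedSwitching S d i j := by
  unfold orientedSwitching
  split_ifs
  exacts [sub_nonneg.2 (hle1 j i), hnn i j]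

theorem orientedSwitching_le_one (hnn : ∀ i j, 0 ≤ d i j) (hle1 : ∀ i j, d i j ≤ 1)
    (i j : Fin n) : orientedSwitching S d i j ≤ 1 := by
  unfold orientedSwitching
  split_ifs
  exacts [sub_le_self 1 (hnn j i), hle1 i j]

/- Whichever of `i, j, k` is separated from the other two decides the inequality of `d` that the
goal becomes: the same one if none is, the inequality of the other kind if `k` is, and a triangle
inequality through `i` or `j` if `i` or `j` is. -/

theorem orientedSwitching_triangle (htri : ∀ i j k, d i j ≤ d i k + d k j)
    (hperim : ∀ i j k, d j i + d i k + d k j ≤ 2) (i j k : Fin n) :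
    orientedSwitching S d i j ≤ orientedSwitching S d i k + orientedSwitching S d k j := by
  by_cases hi : i ∈ S <;> by_cases hj : j ∈ S <;> by_cases hk : k ∈ S <;>
    simp only [orientedSwitching, Xor', hi, hj, hk, xor_self, xor_true, xor_false,
      not_false_eq_true, id_eq, ↓reduceIte] <;>
    linarith [htri i j k, htri k i j, htri j k i, hperim j i k]

theorem orientedSwitching_perimeter (htri : ∀ i j k, d i j ≤ d i k + d k j)
    (hperim : ∀ i j k, d j i + d i k + d k j ≤ 2) (i j k : Fin n) :
    orientedSwitching S d j i + orientedSwitching S d i k + orientedSwitching S d k j ≤ 2 := by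
  by_cases hi : i ∈ S <;> by_cases hj : j ∈ S <;> by_cases hk : k ∈ S <;>
    simp only [orientedSwitching, Xor', hi, hj, hk, xor_self, xor_true, xor_false,
      not_false_eq_true, id_eq, ↓reduceIte] <;>
    linarith [hperim i j k, htri j i k, htri k j i, htri i k j]

end OrientedSwitching

/-- the oriented switching preserves weightable bounded
quasi-metrics: if `d` is a weightable quasi-metric with values in `[0,1]`
satisfying all perimeter inequalities `d(j,i)+d(i,k)+d(k,j) ≤ 2`, then so is
`F_S(d)`. -/
theorem orientedSwitching_preserves_weightable (n : ℕ) (S : Finset (Fin n))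
    (d : Fin n → Fin n → ℝ)
    (hnn : ∀ i j, 0 ≤ d i j)
    (hdiag : ∀ i, d i i = 0)
    (htri : ∀ i j k, d i j ≤ d i k + d k j)
    (hle1 : ∀ i j, d i j ≤ 1)
    (hperim : ∀ i j k, d j i + d i k + d k j ≤ 2)
    (hweight : ∃ w : Fin n → ℝ, ∀ i j, d i j + w i = d j i + w j) :
    (∀ i j, 0 ≤ orientedSwitching S d i j) ∧
    (∀ i, orientedSwitching S d i i = 0) ∧
    (∀ i j k, orientedSwitching S d i j ≤
        orientedSwitching S d i k + orientedSwitching S d k j) ∧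
    (∀ i j, orientedSwitching S d i j ≤ 1) ∧
    (∀ i j k, orientedSwitching S d j i + orientedSwitching S d i k +
        orientedSwitching S d k j ≤ 2) ∧
    (∃ w : Fin n → ℝ, ∀ i j,
        orientedSwitching S d i j + w i = orientedSwitching S d j i + w j) := by
  obtain ⟨w, hw⟩ := hweight
  refine ⟨orientedSwitching_nonneg S hnn hle1,
    fun i => (orientedSwitching_self S d i).trans (hdiag i),
    orientedSwitching_triangle S htri hperim, orientedSwitching_le_one S hnn hle1,
    orientedSwitching_perimeter S htri hperim, w, fun i j => ?_⟩
  linarith [orientedSwitching_sub_swap S d i j, hw i j]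
end

section
/- The cone QMET(G) of a graph G, defined as the projection onto the directed edges of G of the cone of quasi-metrics on the vertex set, equals the set of nonnegative functions on directed edges of G satisfying all oriented cycle inequalities: for every cycle (v_1,...,v_m) in G, d(v_1,v_m) ≤ d(v_1,v_2) + d(v_2,v_3) + ... + d(v_{m-1},v_m). -/
/-- The cone `QMET(K_n)` of quasi-metrics on `n` points. -/
def quasiMetricCone (n : ℕ) : Set (Fin n → Fin n → ℝ) :=
  { d | (∀ i j, 0 ≤ d i j) ∧ (∀ i, d i i = 0) ∧ ∀ i j k, d i j ≤ d i k + d k j }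

/-!
A quasi-metric satisfies the triangle inequality along every walk, which gives the oriented
cycle inequalities. Conversely, given nonnegative dart weights `f` satisfying them, the
`f`-weighted shortest-walk distance, capped at `M = max f` (its value between different
components), is a quasi-metric. It agrees with `f` on every dart `a → b`: the dart itself is a
walk, and every walk from `a` to `b` is at least as long as the path obtained by removing its
cycles, which is at least `f (a → b)` by the cycle inequality.
-/

namespace SimpleGraph

variable {V : Type*} {G : SimpleGraph V} {u v w : V}

namespace Walk

def weightedLength (f : G.Dart → ℝ) (p : G.Walk u v) : ℝ := (p.darts.map f).sum

variable (f : G.Dart → ℝ)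

@[simp]
theorem weightedLength_nil : (nil : G.Walk u u).weightedLength f = 0 := rfl

@[simp]
theorem weightedLength_cons (h : G.Adj u v) (p : G.Walk v w) :
    (cons h p).weightedLength f = f ⟨(u, v), h⟩ + p.weightedLength f := by
  simp [weightedLength]

theorem weightedLength_append (p : G.Walk u v) (q : G.Walk v w) :
    (p.append q).weightedLength f = p.weightedLength f + q.weightedLength f := by
  simp [weightedLength]

variable {f}

theorem weightedLength_nonneg (hf : ∀ e, 0 ≤ f e) (p : G.Walk u v) : 0 ≤ p.weightedLength f :=
  List.sum_nonneg <| by simpa using fun e _ => hf e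

theorem weightedLength_bypass_le [DecidableEq V] (hf : ∀ e, 0 ≤ f e) (p : G.Walk u v) :
    p.bypass.weightedLength f ≤ p.weightedLength f :=
  (p.darts_bypass_sublist_darts.map f).sum_le_sum <| by simpa using fun e _ => hf e

theorem le_weightedLength_of_triangle {d : V → V → ℝ} (hd : ∀ v, d v v = 0)
    (htri : ∀ u v w, d u w ≤ d u v + d v w) (p : G.Walk u v) :
    d u v ≤ p.weightedLength fun e => d e.fst e.snd := by
  induction p with
  | nil => simp [hd]
  | @cons a b c h p ih => simpa using (htri a b c).trans (add_le_add le_rfl ih)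

end Walk

/-- The option `none` contributes the cap `M`, the value when `v` is not reachable from `u`. -/
noncomputable def weightedDist (f : G.Dart → ℝ) (M : ℝ) (u v : V) : ℝ :=
  ⨅ o : Option (G.Walk u v), o.elim M (·.weightedLength f)

variable {f : G.Dart → ℝ} {M : ℝ}

theorem bddBelow_range_weightedDist (hf : ∀ e, 0 ≤ f e) (hM : 0 ≤ M) (u v : V) :
    BddBelow (Set.range fun o : Option (G.Walk u v) => o.elim M (·.weightedLength f)) := by
  refine ⟨0, ?_⟩
  rintro _ ⟨_ | p, rfl⟩
  exacts [hM, p.weightedLength_nonneg hf]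

theorem weightedDist_nonneg (hf : ∀ e, 0 ≤ f e) (hM : 0 ≤ M) (u v : V) :
    0 ≤ weightedDist f M u v :=
  le_ciInf <| by
    rintro (_ | p)
    exacts [hM, p.weightedLength_nonneg hf]

theorem weightedDist_le_cap (hf : ∀ e, 0 ≤ f e) (hM : 0 ≤ M) (u v : V) :
    weightedDist f M u v ≤ M :=
  ciInf_le (bddBelow_range_weightedDist hf hM u v) none

theorem weightedDist_le_weightedLength (hf : ∀ e, 0 ≤ f e) (hM : 0 ≤ M) (p : G.Walk u v) :
    weightedDist f M u v ≤ p.weightedLength f :=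
  ciInf_le (bddBelow_range_weightedDist hf hM u v) (some p)

theorem le_weightedDist {c : ℝ} (hcM : c ≤ M)
    (hc : ∀ p : G.Walk u v, c ≤ p.weightedLength f) : c ≤ weightedDist f M u v :=
  le_ciInf <| by
    rintro (_ | p)
    exacts [hcM, hc p]

theorem weightedDist_self (hf : ∀ e, 0 ≤ f e) (hM : 0 ≤ M) (v : V) :
    weightedDist f M v v = 0 :=
  le_antisymm (weightedDist_le_weightedLength hf hM .nil) (weightedDist_nonneg hf hM v v)

theorem weightedDist_triangle (hf : ∀ e, 0 ≤ f e) (hM : 0 ≤ M) (u v w : V) :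
    weightedDist f M u w ≤ weightedDist f M u v + weightedDist f M v w := by
  have hcap := weightedDist_le_cap hf hM u w
  refine le_ciInf_add_ciInf ?_
  rintro (_ | p) (_ | q)
  · exact hcap.trans (le_add_of_nonneg_right hM)
  · exact hcap.trans (le_add_of_nonneg_right (q.weightedLength_nonneg hf))
  · exact hcap.trans (le_add_of_nonneg_left (p.weightedLength_nonneg hf))
  · exact (weightedDist_le_weightedLength hf hM (p.append q)).trans_eq
      (p.weightedLength_append f q)

theorem weightedDist_of_adj (hf : ∀ e, 0 ≤ f e) {a b : V} (hab : G.Adj a b)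
    (hcap : f ⟨(a, b), hab⟩ ≤ M)
    (hcyc : ∀ p : G.Walk a b, p.IsPath → f ⟨(a, b), hab⟩ ≤ p.weightedLength f) :
    weightedDist f M a b = f ⟨(a, b), hab⟩ := by
  classical
  have hM : 0 ≤ M := (hf _).trans hcap
  refine le_antisymm ?_ (le_weightedDist hcap fun p => ?_)
  · simpa using weightedDist_le_weightedLength hf hM (.cons hab .nil)
  · exact (hcyc _ p.bypass_isPath).trans (p.weightedLength_bypass_le hf)

end SimpleGraph

open SimpleGraph

/-- for a graph `G`, the projection of `QMET(K_n)` onto the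
directed edges (darts) of `G` equals the set of nonnegative functions on darts
satisfying all oriented cycle inequalities: for every cycle of `G`, given as a
path `p` from `a` to `b` closed by the edge `{a,b}`,
`f(a→b) ≤` the sum of `f` along `p`. -/
theorem QMET_graph_description (n : ℕ) (G : SimpleGraph (Fin n)) :
    (fun (d : Fin n → Fin n → ℝ) (dt : G.Dart) => d dt.toProd.1 dt.toProd.2) ''
        quasiMetricCone n =
    { f : G.Dart → ℝ |
        (∀ dt, 0 ≤ f dt) ∧
        ∀ (a b : Fin n) (hab : G.Adj a b) (p : G.Walk a b), p.IsPath →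
          f ⟨(a, b), hab⟩ ≤ (p.darts.map f).sum } := by
  classical
  ext f
  constructor
  · rintro ⟨d, ⟨hpos, hzero, htri⟩, rfl⟩
    exact ⟨fun e => hpos _ _, fun a b _ p _ =>
      Walk.le_weightedLength_of_triangle hzero (fun u v w => htri u w v) p⟩
  · rintro ⟨hf, hcyc⟩
    have hfM : ∀ e, f e ≤ ⨆ e, f e := le_ciSup (Finite.bddAbove_range f)
    have hM : 0 ≤ ⨆ e, f e := Real.iSup_nonneg hf
    refine ⟨weightedDist f (⨆ e, f e), ⟨weightedDist_nonneg hf hM, weightedDist_self hf hM,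
      fun u w v => weightedDist_triangle hf hM u v w⟩, ?_⟩
    exact funext fun e => weightedDist_of_adj hf e.adj (hfM e) (hcyc _ _ e.adj)
end

section
/- Let K ⊆ K' be m-dimensional complexes on {1,...,n} with K' = K ∪ {Δ} for a single simplex Δ ∉ K. If d ∈ HMET(K) (d is nonnegative on K and for every closed manifold M ⊆ K and every Δ_i ∈ M, d(Δ_i) ≤ Σ_{Δ_j ∈ M, j ≠ i} d(Δ_j)), then there exists a nonnegative value α such that extending d by d(Δ) = α yields an element of HMET(K'). -/
/-!
A closed manifold `M ⊆ K ∪ {Δ}` through `Δ` constrains the new value `α = d(Δ)` from above by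
`∑_{M ∖ {Δ}} d` (the inequality at `Δ`) and from below by `d(Δᵢ) - ∑_{M ∖ {Δ, Δᵢ}} d` (the
inequality at another face `Δᵢ`). Every lower bound, coming from `M`, lies below every upper bound,
coming from `M'`: if `Δᵢ ∈ M'` then `d(Δᵢ)` is a term of the upper bound, and otherwise the
symmetric difference `M ∆ M'` is a closed manifold inside `K` containing `Δᵢ`, whose inequality at
`Δᵢ` is the required one. Since there are finitely many bounds, some `α ≥ 0` lies between them.
-/

/-- `M` is a closed `m`-dimensional manifold: every `m`-element subset of the
vertex set is contained in an even number of members of `M`. -/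
def IsClosedManifold (n m : ℕ) (M : Finset (Finset (Fin n))) : Prop :=
  ∀ F : Finset (Fin n), F.card = m → Even ((M.filter (fun Δ => F ⊆ Δ)).card)

open Finset Function

/-- `IsHMet n m K d` says `d ∈ HMET(K)`. -/
def IsHMet (n m : ℕ) (K : Finset (Finset (Fin n))) (d : Finset (Fin n) → ℝ) : Prop :=
  (∀ Δ' ∈ K, 0 ≤ d Δ') ∧
    ∀ M ⊆ K, IsClosedManifold n m M → ∀ Δi ∈ M, d Δi ≤ ∑ Δj ∈ M.erase Δi, d Δj

theorem Finset.even_card_symmDiff {α : Type*} [DecidableEq α] {s t : Finset α}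
    (hs : Even #s) (ht : Even #t) : Even #(symmDiff s t) := by
  have hunion := card_union_add_card_inter s t
  have hle := card_le_card (inter_subset_union (s := s) (t := t))
  rw [symmDiff_eq_sup_sdiff_inf, sup_eq_union, inf_eq_inter,
    card_sdiff_of_subset inter_subset_union]
  rw [Nat.even_iff] at hs ht ⊢
  omega

theorem IsClosedManifold.symmDiff {n m : ℕ} {M₁ M₂ : Finset (Finset (Fin n))}
    (h₁ : IsClosedManifold n m M₁) (h₂ : IsClosedManifold n m M₂) :
    IsClosedManifold n m (symmDiff M₁ M₂) := by
  intro F hF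
  have hfilter : (_root_.symmDiff M₁ M₂).filter (F ⊆ ·) =
      _root_.symmDiff (M₁.filter (F ⊆ ·)) (M₂.filter (F ⊆ ·)) := by
    ext x
    simp only [mem_filter, mem_symmDiff]
    tauto
  rw [hfilter]
  exact even_card_symmDiff (h₁ F hF) (h₂ F hF)

theorem Finset.exists_between_of_forall_le {ι κ β : Type*} [LinearOrder β]
    {I : Finset ι} {J : Finset κ} {f : ι → β} {g : κ → β} {c : β}
    (hfg : ∀ i ∈ I, ∀ j ∈ J, f i ≤ g j) (hcg : ∀ j ∈ J, c ≤ g j) :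
    ∃ a, c ≤ a ∧ (∀ i ∈ I, f i ≤ a) ∧ ∀ j ∈ J, a ≤ g j := by
  classical
  let S := insert c (I.image f)
  have hS : S.Nonempty := insert_nonempty _ _
  refine ⟨S.max' hS, le_max' S c (mem_insert_self _ _),
    fun i hi => le_max' S (f i) (mem_insert_of_mem (mem_image_of_mem f hi)),
    fun j hj => max'_le S hS _ fun x hx => ?_⟩
  rcases mem_insert.1 hx with rfl | hx
  · exact hcg j hj
  · obtain ⟨i, hi, rfl⟩ := mem_image.1 hx
    exact hfg i hi j hj

namespace IsHMet

variable {n m : ℕ} {K : Finset (Finset (Fin n))} {d : Finset (Fin n) → ℝ}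

theorem sum_nonneg (hd : IsHMet n m K d) {s : Finset (Finset (Fin n))} (hs : s ⊆ K) :
    0 ≤ ∑ x ∈ s, d x :=
  Finset.sum_nonneg fun x hx => hd.1 x (hs hx)

theorem le_sum_erase_add_sum_erase (hd : IsHMet n m K d) {Δ Δi : Finset (Fin n)}
    {M₁ M₂ : Finset (Finset (Fin n))} (hM₁ : M₁ ⊆ insert Δ K) (hM₂ : M₂ ⊆ insert Δ K)
    (hcl₁ : IsClosedManifold n m M₁) (hcl₂ : IsClosedManifold n m M₂)
    (hΔ₁ : Δ ∈ M₁) (hΔ₂ : Δ ∈ M₂) (hi : Δi ∈ M₁.erase Δ) :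
    d Δi ≤ ∑ x ∈ (M₁.erase Δ).erase Δi, d x + ∑ x ∈ M₂.erase Δ, d x := by
  set A := (M₁.erase Δ).erase Δi
  set B := M₂.erase Δ
  have hA : A ⊆ K := (erase_subset _ _).trans (subset_insert_iff.1 hM₁)
  have hB : B ⊆ K := subset_insert_iff.1 hM₂
  by_cases hi₂ : Δi ∈ M₂
  · have hle : d Δi ≤ ∑ x ∈ B, d x :=
      single_le_sum (fun x hx => hd.1 x (hB hx)) (mem_erase.2 ⟨ne_of_mem_erase hi, hi₂⟩)
    linarith [hd.sum_nonneg hA]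
  · set N := symmDiff M₁ M₂
    have hN : N ⊆ insert Δi (A ∪ B) := by
      intro x hx
      simp only [N, A, B, mem_symmDiff, mem_insert, mem_union, mem_erase] at hx ⊢
      grind
    have hNK : N ⊆ K := hN.trans (insert_subset (subset_insert_iff.1 hM₁ hi) (union_subset hA hB))
    have hiN : Δi ∈ N := mem_symmDiff.2 (Or.inl ⟨mem_of_mem_erase hi, hi₂⟩)
    calc d Δi ≤ ∑ x ∈ N.erase Δi, d x := hd.2 N hNK (hcl₁.symmDiff hcl₂) Δi hiN
      _ ≤ ∑ x ∈ A ∪ B, d x :=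
        sum_le_sum_of_subset_of_nonneg (subset_insert_iff.1 hN)
          fun x hx _ => hd.1 x (union_subset hA hB hx)
      _ ≤ ∑ x ∈ A, d x + ∑ x ∈ B, d x := by
        rw [← sum_union_inter]
        exact le_add_of_nonneg_right (hd.sum_nonneg (inter_subset_left.trans hA))

theorem update_insert {Δ : Finset (Fin n)} {α : ℝ} (hd : IsHMet n m K d) (hα : 0 ≤ α)
    (hlower : ∀ M ⊆ insert Δ K, IsClosedManifold n m M → Δ ∈ M →
      ∀ Δi ∈ M.erase Δ, d Δi - ∑ x ∈ (M.erase Δ).erase Δi, d x ≤ α)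
    (hupper : ∀ M ⊆ insert Δ K, IsClosedManifold n m M → Δ ∈ M →
      α ≤ ∑ x ∈ M.erase Δ, d x) :
    IsHMet n m (insert Δ K) (update d Δ α) := by
  refine ⟨fun Δ' hΔ' => ?_, fun M hM hcl Δi hi => ?_⟩
  · rcases eq_or_ne Δ' Δ with rfl | hne
    · simpa using hα
    · rw [update_of_ne hne]
      exact hd.1 Δ' ((mem_insert.1 hΔ').resolve_left hne)
  by_cases hΔ : Δ ∈ M
  · rcases eq_or_ne Δi Δ with rfl | hne
    · rw [update_self, sum_update_of_notMem (notMem_erase _ _)]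
      exact hupper M hM hcl hΔ
    · have hi' : Δi ∈ M.erase Δ := mem_erase.2 ⟨hne, hi⟩
      rw [update_of_ne hne, sum_update_of_mem (mem_erase.2 ⟨hne.symm, hΔ⟩),
        sdiff_singleton_eq_erase, erase_right_comm]
      linarith [hlower M hM hcl hΔ Δi hi']
  · rw [update_of_ne (ne_of_mem_of_not_mem hi hΔ),
      sum_update_of_notMem fun h => hΔ (mem_of_mem_erase h)]
    exact hd.2 M ((subset_insert_iff_of_notMem hΔ).1 hM) hcl Δi hi

theorem exists_update (hd : IsHMet n m K d) (Δ : Finset (Fin n)) :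
    ∃ α : ℝ, 0 ≤ α ∧ IsHMet n m (insert Δ K) (update d Δ α) := by
  classical
  let C := (insert Δ K).powerset.filter fun M => IsClosedManifold n m M ∧ Δ ∈ M
  have hC {M} : M ∈ C ↔ M ⊆ insert Δ K ∧ IsClosedManifold n m M ∧ Δ ∈ M := by
    simp only [C, mem_filter, mem_powerset]
  obtain ⟨α, hα, hlower, hupper⟩ := exists_between_of_forall_le
    (I := C.sigma fun M => M.erase Δ) (J := C) (c := 0)
    (f := fun p => d p.2 - ∑ x ∈ (p.1.erase Δ).erase p.2, d x)
    (g := fun M => ∑ x ∈ M.erase Δ, d x)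
    (fun ⟨M₁, Δi⟩ h₁ M₂ h₂ => by
      obtain ⟨⟨hM₁, hcl₁, hΔ₁⟩, hi⟩ := (mem_sigma.1 h₁).imp_left hC.1
      obtain ⟨hM₂, hcl₂, hΔ₂⟩ := hC.1 h₂
      exact sub_le_iff_le_add'.2 (hd.le_sum_erase_add_sum_erase hM₁ hM₂ hcl₁ hcl₂ hΔ₁ hΔ₂ hi))
    (fun M hM => hd.sum_nonneg (subset_insert_iff.1 (hC.1 hM).1))
  refine ⟨α, hα, hd.update_insert hα ?_ ?_⟩
  · exact fun M hM hcl hΔ Δi hi => hlower ⟨M, Δi⟩ (mem_sigma.2 ⟨hC.2 ⟨hM, hcl, hΔ⟩, hi⟩)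
  · exact fun M hM hcl hΔ => hupper M (hC.2 ⟨hM, hcl, hΔ⟩)

end IsHMet

theorem HMET_extension_general (n m : ℕ) (K : Finset (Finset (Fin n)))
    (Δ : Finset (Fin n))
    (d : Finset (Fin n) → ℝ)
    (hnn : ∀ Δ' ∈ K, 0 ≤ d Δ')
    (hineq : ∀ M ⊆ K, IsClosedManifold n m M →
      ∀ Δi ∈ M, d Δi ≤ ∑ Δj ∈ M.erase Δi, d Δj) :
    ∃ α : ℝ, 0 ≤ α ∧
      (∀ Δ' ∈ insert Δ K, 0 ≤ Function.update d Δ α Δ') ∧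
      (∀ M ⊆ insert Δ K, IsClosedManifold n m M →
        ∀ Δi ∈ M, Function.update d Δ α Δi ≤
          ∑ Δj ∈ M.erase Δi, Function.update d Δ α Δj) :=
  IsHMet.exists_update ⟨hnn, hineq⟩ Δ

/-- if `d ∈ HMET(K)` and `Δ ∉ K` is a further `m`-simplex, then
there is a nonnegative value `α` such that extending `d` by `d(Δ) = α` gives an
element of `HMET(K ∪ {Δ})`. -/
theorem HMET_extension (n m : ℕ) (K : Finset (Finset (Fin n)))
    (hK : ∀ Δ' ∈ K, Δ'.card = m + 1)
    (Δ : Finset (Fin n)) (hΔcard : Δ.card = m + 1) (hΔ : Δ ∉ K)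
    (d : Finset (Fin n) → ℝ)
    (hnn : ∀ Δ' ∈ K, 0 ≤ d Δ')
    (hineq : ∀ M ⊆ K, IsClosedManifold n m M →
      ∀ Δi ∈ M, d Δi ≤ ∑ Δj ∈ M.erase Δi, d Δj) :
    ∃ α : ℝ, 0 ≤ α ∧
      (∀ Δ' ∈ insert Δ K, 0 ≤ Function.update d Δ α Δ') ∧
      (∀ M ⊆ insert Δ K, IsClosedManifold n m M →
        ∀ Δi ∈ M, Function.update d Δ α Δi ≤
          ∑ Δj ∈ M.erase Δi, Function.update d Δ α Δj) :=
  HMET_extension_general n m K Δ d hnn hineq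
end
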